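/- arXiv:2007.07553 — 3 statements merged into one kernel-verified Lean document; each statement's English description precedes it below -/
import Mathlib

section
/- The unique root β ≥ 1 of x^(−8) + x^(−8) + x^(−10) + x^(−10) = 1 satisfies β < 1.1092^(3/2), equivalently the induced bound τ(8,8,10,10)^(2/3) < 1.1092. -/
/-! Clearing denominators, the root equation becomes `t ^ 5 = 2 * t + 2` for `t = β ^ 2`.
Since `t ↦ t ^ 5 - 2 * t` is increasing on `[1, ∞)` and already exceeds `2` at `t = 1.1092 ^ 3`,
we get `β ^ 2 < 1.1092 ^ 3`, and both bounds follow by taking real powers. -/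

lemma pow_ten_eq_of_branching_eq {x : ℝ} (hx : 0 < x)
    (h : x ^ (-(8:ℝ)) + x ^ (-(8:ℝ)) + x ^ (-(10:ℝ)) + x ^ (-(10:ℝ)) = 1) :
    x ^ 10 = 2 * x ^ 2 + 2 := by
  have h8 : x ^ (-(8:ℝ)) = (x ^ 8)⁻¹ := by exact_mod_cast Real.rpow_neg_natCast x 8
  have h10 : x ^ (-(10:ℝ)) = (x ^ 10)⁻¹ := by exact_mod_cast Real.rpow_neg_natCast x 10
  rw [h8, h10] at h
  field_simp at h
  linear_combination -h

lemma strictMonoOn_pow_five_sub_two_mul :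
    StrictMonoOn (fun t : ℝ => t ^ 5 - 2 * t) (Set.Ici 1) := by
  intro s (hs : 1 ≤ s) t (ht : 1 ≤ t) hst
  have hsum : 5 ≤ t ^ 4 + t ^ 3 * s + t ^ 2 * s ^ 2 + t * s ^ 3 + s ^ 4 := by
    have one_le {a b : ℝ} (ha : 1 ≤ a) (hb : 1 ≤ b) := one_le_mul_of_one_le_of_one_le ha hb
    linarith [one_le_pow₀ (n := 4) ht, one_le_pow₀ (n := 4) hs, one_le (one_le_pow₀ (n := 3) ht) hs,
      one_le (one_le_pow₀ (n := 2) ht) (one_le_pow₀ (n := 2) hs), one_le ht (one_le_pow₀ (n := 3) hs)]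
  have hfactor : t ^ 5 - s ^ 5 = (t - s) * (t ^ 4 + t ^ 3 * s + t ^ 2 * s ^ 2 + t * s ^ 3 + s ^ 4) := by
    ring
  show s ^ 5 - 2 * s < t ^ 5 - 2 * t
  nlinarith

lemma Real.rpow_div_lt_of_pow_lt {x y : ℝ} (hx : 0 ≤ x) (hy : 0 ≤ y) {m n : ℕ} (hn : n ≠ 0)
    (h : x ^ m < y ^ n) : x ^ ((m : ℝ) / n) < y := calc
  x ^ ((m : ℝ) / n) = (x ^ m) ^ ((n : ℝ)⁻¹) := by rw [div_eq_mul_inv, Real.rpow_natCast_mul hx]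
  _ < (y ^ n) ^ ((n : ℝ)⁻¹) := Real.rpow_lt_rpow (by positivity) h (by positivity)
  _ = y := Real.pow_rpow_inv_natCast hy hn

/-- The root of x^(−8)+x^(−8)+x^(−10)+x^(−10)=1 satisfies β < 1.1092^(3/2),
equivalently τ(8,8,10,10)^(2/3) < 1.1092. -/
theorem tau_8_8_10_10_bound (β : ℝ) (hβ : 1 ≤ β)
    (hroot : β ^ (-(8:ℝ)) + β ^ (-(8:ℝ)) + β ^ (-(10:ℝ)) + β ^ (-(10:ℝ)) = 1) :
    β < (1.1092 : ℝ) ^ ((3:ℝ)/2) ∧ β ^ ((2:ℝ)/3) < 1.1092 := by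
  have hβ0 : 0 < β := by linarith
  have hpoly := pow_ten_eq_of_branching_eq hβ0 hroot
  have hsq : β ^ 2 < (1.1092 : ℝ) ^ 3 := by
    refine (strictMonoOn_pow_five_sub_two_mul.lt_iff_lt (one_le_pow₀ hβ) (by norm_num)).1 ?_
    show (β ^ 2) ^ 5 - 2 * β ^ 2 < ((1.1092 : ℝ) ^ 3) ^ 5 - 2 * (1.1092 : ℝ) ^ 3
    rw [← pow_mul, hpoly]
    norm_num
  have hpow : β ^ ((2:ℝ)/3) < 1.1092 := by
    exact_mod_cast Real.rpow_div_lt_of_pow_lt hβ0.le (by norm_num) (by norm_num) hsq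
  refine ⟨?_, hpow⟩
  rwa [show (3:ℝ)/2 = ((2:ℝ)/3)⁻¹ by norm_num,
    Real.lt_rpow_inv_iff_of_pos hβ0.le (by norm_num) (by norm_num)]
end

section
/- The singleton-merging rule is sound: if x and y each occur only in the clause (x ∨ y ∨ δ) of φ, and φ' is obtained by deleting y from that clause with updated weights c'(x) = c(x)·c(¬y) + c(¬x)·c(y) and c'(¬x) = c(¬x)·c(¬y) (other entries unchanged), then the weighted model count of φ with weights c equals the weighted model count of φ' with weights c'. -/
/-!
Fix the assignment `h` of the remaining variables. Since `x` and `y` occur only in the clause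
`x ∨ y ∨ δ`, the exact-satisfaction constraint couples them to `h` only through the truth value
of `δ` under `h`, and the weight factorises. Summing out `y` then leaves `x` true exactly when one
of `x, y` is, with total weight `c(x)·c(¬y) + c(¬x)·c(y)`, and `x` false exactly when both are,
with weight `c(¬x)·c(¬y)`: these are the merged weights.
-/

theorem sum_exactlyOne_pair_eq_merged {R : Type*} [CommSemiring R] (δ : Bool) (a na b nb t : R) :
    ∑ y : Bool, ∑ x : Bool,
      (if ((if x then 1 else 0) + (if y then 1 else 0) + (if δ then 1 else 0) : ℕ) = 1
        then (if x then a else na) * (if y then b else nb) * t else 0)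
    = ∑ x : Bool, if ((if x then 1 else 0) + (if δ then 1 else 0) : ℕ) = 1
        then (if x then a * nb + na * b else na * nb) * t else 0 := by
  cases δ
  · simp; ring
  · simp

/-- Soundness of the singleton-merging rule: merging the two singletons x, y of
the clause (x ∨ y ∨ δ) into x, with weights c'(x) = c(x)·c(¬y) + c(¬x)·c(y) and
c'(¬x) = c(¬x)·c(¬y), preserves the weighted model count. -/
theorem singleton_merge_sound
    {α : Type*} [Fintype α] [DecidableEq α]
    (ψ : (α → Bool) → Prop) [DecidablePred ψ]
    (d : (α → Bool) → Bool)
    (cx cnx cy cny : ℕ) (c : α → Bool → ℕ) :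
    (Finset.univ.filter (fun p : Bool × Bool × (α → Bool) =>
        ((if p.1 then 1 else 0) + (if p.2.1 then 1 else 0) +
          (if d p.2.2 then 1 else 0) : ℕ) = 1 ∧ ψ p.2.2)).sum
      (fun p => (if p.1 then cx else cnx) * (if p.2.1 then cy else cny)
        * ∏ v, c v (p.2.2 v))
    = (Finset.univ.filter (fun q : Bool × (α → Bool) =>
        ((if q.1 then 1 else 0) + (if d q.2 then 1 else 0) : ℕ) = 1 ∧ ψ q.2)).sum
      (fun q => (if q.1 then cx * cny + cnx * cy else cnx * cny)
        * ∏ v, c v (q.2 v)) := by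
  simp only [Finset.sum_filter, Fintype.sum_prod_type_right]
  refine Finset.sum_congr rfl fun h _ => ?_
  by_cases hψ : ψ h
  · simp only [hψ, and_true, sum_exactlyOne_pair_eq_merged]
  · simp only [hψ, and_false, if_false, Finset.sum_const_zero]
end

section
/- Linking is sound: if every exactly satisfying assignment of φ has y = ¬x, and φ' = φ[y := ¬x] with updated weights c'(x) = c(x)·c(¬y), c'(¬x) = c(¬x)·c(y) (entries for y, ¬y dropped), then the weighted model count of φ with weights c equals the weighted model count of φ' with weights c'. -/
open Finset

theorem sum_filter_eq_sum_filter_not_of_linked {β M : Type*} [Fintype β] [AddCommMonoid M]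
    (φ : Bool → Bool → β → Prop) [∀ a b, DecidablePred (φ a b)]
    (hlink : ∀ a b h, φ a b h → b = !a) (f : Bool × Bool × β → M) :
    ∑ p ∈ univ.filter (fun p : Bool × Bool × β => φ p.1 p.2.1 p.2.2), f p
      = ∑ q ∈ univ.filter (fun q : Bool × β => φ q.1 (!q.1) q.2), f (q.1, !q.1, q.2) := by
  refine sum_nbij' (fun p => (p.1, p.2.2)) (fun q => (q.1, !q.1, q.2)) ?_ ?_ ?_ ?_ ?_
  · rintro ⟨a, b, h⟩ hp
    simp only [mem_filter, mem_univ, true_and] at hp ⊢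
    rwa [← hlink a b h hp]
  · exact fun _ hq => by simpa only [mem_filter, mem_univ, true_and] using hq
  · rintro ⟨a, b, h⟩ hp
    simp only [mem_filter, mem_univ, true_and] at hp
    rw [← hlink a b h hp]
  · exact fun _ _ => rfl
  · rintro ⟨a, b, h⟩ hp
    simp only [mem_filter, mem_univ, true_and] at hp
    rw [← hlink a b h hp]

theorem ite_mul_ite_not {M : Type*} [Mul M] (a : Bool) (x nx y ny : M) :
    (if a then x else nx) * (if !a then y else ny) = if a then x * ny else nx * y := by
  cases a <;> rfl

/-- Soundness of linking: if every exactly satisfying assignment of φ has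
y = ¬x, then substituting y := ¬x with weights c'(x) = c(x)·c(¬y),
c'(¬x) = c(¬x)·c(y) preserves the weighted model count. -/
theorem linking_sound
    {α : Type*} [Fintype α] [DecidableEq α]
    (φ : Bool → Bool → (α → Bool) → Prop) [∀ a b, DecidablePred (φ a b)]
    (cx cnx cy cny : ℕ) (c : α → Bool → ℕ)
    (hlink : ∀ a b : Bool, ∀ h : α → Bool, φ a b h → b = !a) :
    (Finset.univ.filter (fun p : Bool × Bool × (α → Bool) => φ p.1 p.2.1 p.2.2)).sum
      (fun p => (if p.1 then cx else cnx) * (if p.2.1 then cy else cny)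
        * ∏ v, c v (p.2.2 v))
    = (Finset.univ.filter (fun q : Bool × (α → Bool) => φ q.1 (!q.1) q.2)).sum
      (fun q => (if q.1 then cx * cny else cnx * cy) * ∏ v, c v (q.2 v)) := by
  rw [sum_filter_eq_sum_filter_not_of_linked φ hlink]
  simp only [ite_mul_ite_not]
end
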